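/- (Effective local-dimension invariance) Let q, p be distinct primes and let M = [I_k X_2 | Z_1 Z_2] ∈ Z^{k×2n} with all entries in {0,…,q−1}. Then there exists a strictly lower triangular integer matrix L ∈ Z^{k×k} with every entry divisible by q such that M' = [I_k X_2 | Z_1+L Z_2] satisfies: the integer symplectic product of any two distinct rows of M' is ≡ 0 (mod p). In particular M' ≡ M (mod q). -/

import Mathlib

/-!
Write `S i j` for the symplectic product of rows `i` and `j` of `M`; `S` is antisymmetric.
Adding `L i` to the `Z_1`-block of row `i` changes `S i j` by `L j i - L i j`, because the
`X_1`-block is the identity. Taking `L = c • (strictly lower part of S)` makes this change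
`-c * S i j` for `i ≠ j`, so the new products are `(1 - c) * S i j`. Choosing `c = q a` with
`q a + p b = 1` (Bézout, as `q ≠ p` are primes) makes them `p b S i j`, while `L ≡ 0 (mod q)`.
-/

/-- Integer symplectic product ⊙(u,v) = Σ_k (v_z)_k(u_x)_k − (v_x)_k(u_z)_k. -/
def symp {ι : Type} [Fintype ι] (u v : (ι → ℤ) × (ι → ℤ)) : ℤ :=
  ∑ i, (v.2 i * u.1 i - v.1 i * u.2 i)

theorem symp_swap {ι : Type} [Fintype ι] (u v : (ι → ℤ) × (ι → ℤ)) :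
    symp v u = -symp u v := by
  simp only [symp, ← Finset.sum_neg_distrib]
  exact Finset.sum_congr rfl fun _ _ => by ring

theorem symp_add_snd {ι : Type} [Fintype ι] (x x' z z' w w' : ι → ℤ) :
    symp (x, fun c => z c + w c) (x', fun c => z' c + w' c)
      = symp (x, z) (x', z') + symp (x, w) (x', w') := by
  simp only [symp, ← Finset.sum_add_distrib]
  exact Finset.sum_congr rfl fun _ _ => by ring

theorem symp_elim_of_identity_block {ι κ : Type} [Fintype ι] [DecidableEq ι] [Fintype κ]
    (X : ι → ι ⊕ κ → ℤ) (hX : ∀ i j, X i (Sum.inl j) = if i = j then 1 else 0)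
    (L : Matrix ι ι ℤ) (i j : ι) :
    symp (X i, Sum.elim (L i) 0) (X j, Sum.elim (L j) 0) = L j i - L i j := by
  simp [symp, Fintype.sum_sum_type, hX, Finset.sum_sub_distrib]

section StrictLower

variable {ι R : Type} [LinearOrder ι] [CommRing R]

def Matrix.strictLower (S : Matrix ι ι R) : Matrix ι ι R :=
  Matrix.of fun i j => if j < i then S i j else 0

theorem Matrix.strictLower_apply_of_le (S : Matrix ι ι R) {i j : ι} (hij : i ≤ j) :
    S.strictLower i j = 0 := by
  simp [strictLower, not_lt.mpr hij]

theorem Matrix.strictLower_sub_strictLower_of_antisymm {S : Matrix ι ι R}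
    (hS : ∀ i j, S j i = -S i j) {i j : ι} (hij : i ≠ j) :
    S.strictLower j i - S.strictLower i j = S j i := by
  rcases hij.lt_or_gt with h | h
  · simp [strictLower, h, not_lt.mpr h.le]
  · simp [strictLower, h, not_lt.mpr h.le, hS i j]

end StrictLower

theorem stmt8_general (q p k m : ℕ) [Fact (Nat.Prime q)] [Fact (Nat.Prime p)] (hqp : q ≠ p)
    (Mx Mz : Matrix (Fin k) (Fin k ⊕ Fin m) ℤ)
    (hId : ∀ i j, Mx i (Sum.inl j) = if i = j then 1 else 0) :
    ∃ L : Matrix (Fin k) (Fin k) ℤ,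
      (∀ i j : Fin k, i ≤ j → L i j = 0) ∧
      (∀ i j : Fin k, (q : ℤ) ∣ L i j) ∧
      (∀ i j : Fin k, i ≠ j →
        (p : ℤ) ∣ symp (Mx i, fun c => Mz i c + Sum.elim (L i) 0 c)
                       (Mx j, fun c => Mz j c + Sum.elim (L j) 0 c)) := by
  obtain ⟨a, b, hab⟩ : IsCoprime (q : ℤ) p :=
    Nat.isCoprime_iff_coprime.mpr ((Nat.coprime_primes Fact.out Fact.out).mpr hqp)
  obtain ⟨S, hS_def⟩ : ∃ S : Matrix (Fin k) (Fin k) ℤ,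
      ∀ i j, symp (Mx i, Mz i) (Mx j, Mz j) = S i j := ⟨_, fun _ _ => rfl⟩
  have hS : ∀ i j, S j i = -S i j := fun i j => by
    rw [← hS_def, ← hS_def, symp_swap]
  refine ⟨((q : ℤ) * a) • S.strictLower, fun i j hij => ?_, fun i j => ?_, fun i j hij => ?_⟩
  · simp [S.strictLower_apply_of_le hij]
  · exact dvd_mul_of_dvd_left (dvd_mul_right _ _) _
  · have hL := S.strictLower_sub_strictLower_of_antisymm hS hij
    refine ⟨b * S i j, ?_⟩
    rw [symp_add_snd, symp_elim_of_identity_block Mx hId, hS_def]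
    simp only [Matrix.smul_apply, smul_eq_mul, ← mul_sub, hL, hS i j]
    linear_combination (-S i j) * hab

/-- effective local-dimension invariance: for distinct primes q, p and
M = [I_k X_2 | Z_1 Z_2] ∈ Z^{k×2n} with entries in {0,…,q−1}, there is a strictly lower
triangular integer matrix L with all entries divisible by q (so M' ≡ M (mod q)) such that
M' = [I_k X_2 | Z_1+L Z_2] has all pairwise symplectic products of distinct rows ≡ 0 (mod p). -/
theorem stmt8 (q p k m : ℕ) [Fact (Nat.Prime q)] [Fact (Nat.Prime p)] (hqp : q ≠ p)
    (Mx Mz : Matrix (Fin k) (Fin k ⊕ Fin m) ℤ)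
    (hId : ∀ i j, Mx i (Sum.inl j) = if i = j then 1 else 0)
    (hbx : ∀ i c, 0 ≤ Mx i c ∧ Mx i c ≤ (q : ℤ) - 1)
    (hbz : ∀ i c, 0 ≤ Mz i c ∧ Mz i c ≤ (q : ℤ) - 1) :
    ∃ L : Matrix (Fin k) (Fin k) ℤ,
      (∀ i j : Fin k, i ≤ j → L i j = 0) ∧
      (∀ i j : Fin k, (q : ℤ) ∣ L i j) ∧
      (∀ i j : Fin k, i ≠ j →
        (p : ℤ) ∣ symp (Mx i, fun c => Mz i c + Sum.elim (L i) 0 c)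
                       (Mx j, fun c => Mz j c + Sum.elim (L j) 0 c)) :=
  stmt8_general q p k m hqp Mx Mz hId
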